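/- For all natural numbers n ≥ 1, the sum over k from 1 to n of k³·H_k·H_{n-k} equals n²(n+1)²/4 · [H_{n+1}² - H^{(2)}_{n+1} - (7n+5)/(3(n+1))·H_{n+1} + (35n+37)/(18(n+1))]. -/

import Mathlib

open Finset BigOperators

def H (n : ℕ) : ℚ := ∑ i ∈ Finset.range n, 1 / (i + 1 : ℚ)

def H2 (n : ℕ) : ℚ := ∑ i ∈ Finset.range n, 1 / ((i + 1 : ℚ))^2

/-!
Write the sum as a convolution `S n = ∑_{i + j = n} i³ H_i H_j`. Since `H_{j+1} = H_j + 1/(j+1)`,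
the increment `S (n+1) - S n` is `∑_{i + j = n} i³ H_i / (j+1)`. With `m = n + 1 = i + j + 1`,
the factorisation `i³ = m³ - (j+1)(m² + m i + i²)` turns this into `m³ ∑_{i + j = n} H_i / (j+1)`
minus sums `∑_{i < m} iᵖ H_i` (`p ≤ 2`), which are elementary. The remaining convolution equals
`H_m² - H⁽²⁾_m`: its increment is `∑_{i + j = n} 1/((i+1)(j+1)) = 2 H_m / (m+1)` by partial fractions.
-/

open Finset.Nat

lemma H_zero : H 0 = 0 := by simp [H]

lemma H_succ (n : ℕ) : H (n + 1) = H n + 1 / (n + 1) := by simp [H, sum_range_succ]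

lemma H2_succ (n : ℕ) : H2 (n + 1) = H2 n + 1 / (n + 1) ^ 2 := by simp [H2, sum_range_succ]

lemma sum_range_H (m : ℕ) : ∑ i ∈ range m, H i = m * H m - m := by
  induction m with
  | zero => simp
  | succ m ih =>
    rw [sum_range_succ, ih, H_succ]
    push_cast
    field_simp
    ring

lemma sum_range_mul_H (m : ℕ) :
    ∑ i ∈ range m, (i : ℚ) * H i = m * (m - 1) / 2 * H m - m * (m - 1) / 4 := by
  induction m with
  | zero => simp
  | succ m ih =>
    rw [sum_range_succ, ih, H_succ]
    push_cast
    field_simp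
    ring

lemma sum_range_sq_mul_H (m : ℕ) :
    ∑ i ∈ range m, (i : ℚ) ^ 2 * H i
      = m * (m - 1) * (2 * m - 1) / 6 * H m - m * (m - 1) * (4 * m + 1) / 36 := by
  induction m with
  | zero => simp
  | succ m ih =>
    rw [sum_range_succ, ih, H_succ]
    push_cast
    field_simp
    ring

lemma sum_antidiagonal_inv_succ (n : ℕ) :
    ∑ p ∈ antidiagonal n, 1 / (p.1 + 1 : ℚ) = H (n + 1) := by
  rw [sum_antidiagonal_eq_sum_range_succ (fun i _ => 1 / (i + 1 : ℚ)), H]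

lemma sum_antidiagonal_inv_succ_mul_inv_succ (n : ℕ) :
    ∑ p ∈ antidiagonal n, 1 / ((p.1 + 1 : ℚ) * (p.2 + 1)) = 2 * H (n + 1) / (n + 2) := by
  have partial_fractions : ∀ p ∈ antidiagonal n, 1 / ((p.1 + 1 : ℚ) * (p.2 + 1))
      = (1 / (p.1 + 1 : ℚ) + 1 / (p.2 + 1 : ℚ)) / (n + 2) := by
    rintro ⟨i, j⟩ hij
    rw [HasAntidiagonal.mem_antidiagonal] at hij
    subst hij
    push_cast
    field_simp
    ring
  rw [sum_congr rfl partial_fractions, ← sum_div, sum_add_distrib, sum_antidiagonal_inv_succ,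
    ← sum_antidiagonal_swap]
  simp only [Prod.snd_swap]
  rw [sum_antidiagonal_inv_succ]
  ring

lemma sum_antidiagonal_H_div_succ (n : ℕ) :
    ∑ p ∈ antidiagonal n, H p.1 / (p.2 + 1) = H (n + 1) ^ 2 - H2 (n + 1) := by
  induction n with
  | zero => simp [H, H2]
  | succ n ih =>
    have split : ∀ p ∈ antidiagonal n, H (p.1 + 1) / (p.2 + 1)
        = H p.1 / (p.2 + 1) + 1 / ((p.1 + 1 : ℚ) * (p.2 + 1)) := by
      intro p _
      rw [H_succ]
      field_simp
    rw [sum_antidiagonal_succ, H_zero, zero_div, zero_add, sum_congr rfl split, sum_add_distrib,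
      ih, sum_antidiagonal_inv_succ_mul_inv_succ, H_succ (n + 1), H2_succ (n + 1)]
    push_cast
    field_simp
    ring

lemma sum_antidiagonal_cube_mul_H_div_succ (n : ℕ) :
    ∑ p ∈ antidiagonal n, (p.1 : ℚ) ^ 3 * H p.1 / (p.2 + 1)
      = ((n : ℚ) + 1) ^ 3 * (H (n + 1) ^ 2 - H2 (n + 1))
        - ((n : ℚ) + 1) * (11 * n ^ 2 + 16 * n + 6) / 6 * H (n + 1)
        + ((n : ℚ) + 1) * (49 * n ^ 2 + 86 * n + 36) / 36 := by
  have cube : ∀ p ∈ antidiagonal n, (p.1 : ℚ) ^ 3 * H p.1 / (p.2 + 1)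
      = ((n : ℚ) + 1) ^ 3 * (H p.1 / (p.2 + 1))
        - (((n : ℚ) + 1) ^ 2 * H p.1 + ((n : ℚ) + 1) * ((p.1 : ℚ) * H p.1)
          + (p.1 : ℚ) ^ 2 * H p.1) := by
    rintro ⟨i, j⟩ hij
    rw [HasAntidiagonal.mem_antidiagonal] at hij
    subst hij
    push_cast
    field_simp
    ring
  rw [sum_congr rfl cube, sum_sub_distrib, ← mul_sum, sum_antidiagonal_H_div_succ,
    sum_antidiagonal_eq_sum_range_succ
      (fun i _ => ((n : ℚ) + 1) ^ 2 * H i + ((n : ℚ) + 1) * ((i : ℚ) * H i) + (i : ℚ) ^ 2 * H i),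
    sum_add_distrib, sum_add_distrib, ← mul_sum, ← mul_sum, sum_range_H, sum_range_mul_H,
    sum_range_sq_mul_H]
  push_cast
  ring

lemma sum_antidiagonal_mul_H_succ (f : ℕ → ℚ) (n : ℕ) :
    ∑ p ∈ antidiagonal (n + 1), f p.1 * H p.2
      = ∑ p ∈ antidiagonal n, f p.1 * H p.2 + ∑ p ∈ antidiagonal n, f p.1 / (p.2 + 1) := by
  rw [sum_antidiagonal_succ', H_zero, mul_zero, zero_add, ← sum_add_distrib]
  refine sum_congr rfl fun p _ => ?_
  rw [H_succ]
  ring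

lemma sum_antidiagonal_cube_mul_H_mul_H (n : ℕ) :
    ∑ p ∈ antidiagonal n, (p.1 : ℚ) ^ 3 * H p.1 * H p.2
      = (n : ℚ) ^ 2 * (n + 1) ^ 2 / 4
          * (H (n + 1) ^ 2 - H2 (n + 1)
            - (7 * n + 5) / (3 * (n + 1)) * H (n + 1)
            + (35 * n + 37) / (18 * (n + 1))) := by
  induction n with
  | zero => simp
  | succ n ih =>
    rw [sum_antidiagonal_mul_H_succ (fun i => (i : ℚ) ^ 3 * H i), ih,
      sum_antidiagonal_cube_mul_H_div_succ, H_succ (n + 1), H2_succ (n + 1)]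
    push_cast
    field_simp
    ring

theorem stmt11_general (n : ℕ) :
    ∑ k ∈ Finset.Icc 1 n, (k : ℚ)^3 * H k * H (n - k)
      = (n : ℚ)^2 * (n + 1)^2 / 4
          * (H (n + 1)^2 - H2 (n + 1)
            - (7 * n + 5) / (3 * (n + 1)) * H (n + 1)
            + (35 * n + 37) / (18 * (n + 1))) := by
  rw [← sum_antidiagonal_cube_mul_H_mul_H,
    sum_antidiagonal_eq_sum_range_succ (fun i j => (i : ℚ) ^ 3 * H i * H j),
    Nat.range_succ_eq_Icc_zero,
    ← insert_Icc_add_one_left_eq_Icc n.zero_le, sum_insert (by simp)]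
  simp

theorem stmt11 (n : ℕ) (hn : 1 ≤ n) :
    ∑ k ∈ Finset.Icc 1 n, (k : ℚ)^3 * H k * H (n - k)
      = (n : ℚ)^2 * (n + 1)^2 / 4
          * (H (n + 1)^2 - H2 (n + 1)
            - (7 * n + 5) / (3 * (n + 1)) * H (n + 1)
            + (35 * n + 37) / (18 * (n + 1))) :=
  stmt11_general n
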